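/- arXiv:1507.03851 — 6 statements merged into one kernel-verified Lean document; each statement's English description precedes it below -/
import Mathlib

section
/- (Soundness of local condition synthesis, Theorem 1.) Let C be a set of transitions, Q : L → (V → Prop) a conditional inductive invariant for C, t_exit = (ℓ̃, τ_e, ℓ_e) a transition with t_exit ∉ C, and φ : V → Prop a property satisfying the Safety condition: for all v, v', if Q ℓ̃ v and τ_e v v', then φ v'. Then for every transition t = (ℓ, τ, ℓ') and all valuations, if (ℓ, v₀) →_t (ℓ', v₁), (ℓ', v₁) →_C^* (ℓ̃, v), (ℓ̃, v) →_{t_exit} (ℓ_e, v'), and Q ℓ' v₁ holds, then φ v' holds. In other words, the program C ∪ {t, t_exit} is (t, Q ℓ')-conditionally safe for the assertion (t_exit, φ) on evaluations whose intermediate steps use only transitions of C. -/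
/-- A program transition: source location, transition relation on valuations, target location. -/
structure Transition (L V : Type*) where
  src : L
  rel : V → V → Prop
  tgt : L

variable {L V : Type*}

/-- Evaluation step via a single transition `t`. -/
def StepT (t : Transition L V) (s s' : L × V) : Prop :=
  s.1 = t.src ∧ s'.1 = t.tgt ∧ t.rel s.2 s'.2

/-- Evaluation step via some transition of the program `P`. -/
def StepP (P : Set (Transition L V)) (s s' : L × V) : Prop :=
  ∃ t ∈ P, StepT t s s'

/-- Reflexive-transitive closure of program evaluation steps. -/
def Steps (P : Set (Transition L V)) : L × V → L × V → Prop :=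
  Relation.ReflTransGen (StepP P)

/-- `Q` is a conditional inductive invariant for the set of transitions `C`. -/
def CondInductiveInv (C : Set (Transition L V)) (Q : L → V → Prop) : Prop :=
  ∀ t ∈ C, ∀ v v' : V, Q t.src v → t.rel v v' → Q t.tgt v'

/-- `P` is safe for the assertion `(t, φ)` (w.r.t. the initial location `ℓ0`). -/
def Safe (ℓ0 : L) (P : Set (Transition L V)) (t : Transition L V) (φ : V → Prop) : Prop :=
  ∀ (v₀ : V) (sb s : L × V), Steps P (ℓ0, v₀) sb → StepT t sb s → φ s.2

/-- `P` is `(t', φ')`-conditionally safe for the assertion `(t, φ)`: every evaluation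
containing a segment `→_{t'} s' →_P^* sb →_t s` with `φ' s'.2` satisfies `φ s.2`. -/
def CondSafe (P : Set (Transition L V)) (t' : Transition L V) (φ' : V → Prop)
    (t : Transition L V) (φ : V → Prop) : Prop :=
  ∀ s₀ s' sb s : L × V, StepT t' s₀ s' → Steps P s' sb → StepT t sb s → φ' s'.2 → φ s.2

namespace CondInductiveInv

variable {C : Set (Transition L V)} {Q : L → V → Prop}

theorem of_stepP (hQ : CondInductiveInv C Q) {a b : L × V} (h : StepP C a b)
    (ha : Q a.1 a.2) : Q b.1 b.2 := by
  obtain ⟨u, hu, hsrc, htgt, hrel⟩ := h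
  rw [htgt]
  exact hQ u hu _ _ (hsrc ▸ ha) hrel

theorem of_steps (hQ : CondInductiveInv C Q) {a b : L × V} (h : Steps C a b)
    (ha : Q a.1 a.2) : Q b.1 b.2 := by
  induction h with
  | refl => exact ha
  | tail _ hstep ih => exact hQ.of_stepP hstep ih

end CondInductiveInv

theorem condSafe_sound_general (C : Set (Transition L V)) (Q : L → V → Prop)
    (hQ : CondInductiveInv C Q)
    (texit : Transition L V) (φ : V → Prop)
    (hsafety : ∀ v v' : V, Q texit.src v → texit.rel v v' → φ v')
    (t : Transition L V) :
    ∀ v₀ v₁ v v' : V,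
      t.rel v₀ v₁ → Steps C (t.tgt, v₁) (texit.src, v) → texit.rel v v' →
      Q t.tgt v₁ → φ v' :=
  fun _ _ v v' _ hsteps hexitRel hQ₁ => hsafety v v' (hQ.of_steps hsteps hQ₁) hexitRel

/-- Theorem 1: soundness of local condition synthesis. -/
theorem condSafe_sound (C : Set (Transition L V)) (Q : L → V → Prop)
    (hQ : CondInductiveInv C Q)
    (texit : Transition L V) (hexit : texit ∉ C) (φ : V → Prop)
    (hsafety : ∀ v v' : V, Q texit.src v → texit.rel v v' → φ v')
    (t : Transition L V) :
    ∀ v₀ v₁ v v' : V,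
      t.rel v₀ v₁ → Steps C (t.tgt, v₁) (texit.src, v) → texit.rel v v' →
      Q t.tgt v₁ → φ v' :=
  condSafe_sound_general C Q hQ texit φ hsafety t
end

section
/- (Transitivity of conditional safety under domination.) Let P be a program, t ∈ P a transition, φ : V → Prop, and E = {t̃₁, …, t̃_m} a finite set of transitions of P that dominates t, in the sense that every evaluation of P starting at an initial state and ending with a step via t contains an earlier step via some t̃ᵢ ∈ E. Suppose that for each i, P is (t̃ᵢ, φ̃ᵢ)-conditionally safe for the assertion (t, φ), and P is safe for the assertion (t̃ᵢ, φ̃ᵢ). Then P is safe for the assertion (t, φ). -/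
variable {L V : Type*}

theorem safe_of_dominating_condSafe_general (ℓ0 : L) (P : Set (Transition L V))
    (t : Transition L V) (φ : V → Prop)
    (m : ℕ) (E : Fin m → Transition L V) (φE : Fin m → V → Prop)
    (hdom : ∀ (v₀ : V) (sb s : L × V), Steps P (ℓ0, v₀) sb → StepT t sb s →
      ∃ i : Fin m, ∃ s₁ s₂ : L × V,
        Steps P (ℓ0, v₀) s₁ ∧ StepT (E i) s₁ s₂ ∧ Steps P s₂ sb)
    (hcond : ∀ i, CondSafe P (E i) (φE i) t φ)
    (hsafe : ∀ i, Safe ℓ0 P (E i) (φE i)) :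
    Safe ℓ0 P t φ := by
  intro v₀ sb s hreach hstep
  obtain ⟨i, s₁, s₂, hreach₁, hstepE, hsteps₂⟩ := hdom v₀ sb s hreach hstep
  exact hcond i s₁ s₂ sb s hstepE hsteps₂ hstep (hsafe i v₀ s₁ s₂ hreach₁ hstepE)

/-- transitivity of conditional safety under domination. -/
theorem safe_of_dominating_condSafe (ℓ0 : L) (P : Set (Transition L V))
    (t : Transition L V) (ht : t ∈ P) (φ : V → Prop)
    (m : ℕ) (E : Fin m → Transition L V) (φE : Fin m → V → Prop)
    (hEP : ∀ i, E i ∈ P)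
    (hdom : ∀ (v₀ : V) (sb s : L × V), Steps P (ℓ0, v₀) sb → StepT t sb s →
      ∃ i : Fin m, ∃ s₁ s₂ : L × V,
        Steps P (ℓ0, v₀) s₁ ∧ StepT (E i) s₁ s₂ ∧ Steps P s₂ sb)
    (hcond : ∀ i, CondSafe P (E i) (φE i) t φ)
    (hsafe : ∀ i, Safe ℓ0 P (E i) (φE i)) :
    Safe ℓ0 P t φ :=
  safe_of_dominating_condSafe_general ℓ0 P t φ m E φE hdom hcond hsafe
end

section
/- (Narrowing of component transitions preserves unsafe evaluations; from the proof of Theorem 2.) Let C be a set of transitions, Q : L → (V → Prop) a conditional inductive invariant for C, and t_exit = (ℓ̃, τ_e, ℓ_e) ∉ C with φ : V → Prop satisfying: for all v, v', if Q ℓ̃ v and τ_e v v' then φ v'. Consider any evaluation of the form (ℓ', v₁) →_C^* (ℓ_a, v_a) →_{t_c} (ℓ_b, v_b) →_C^* (ℓ̃, v) →_{t_exit} (ℓ_e, v') with t_c ∈ C and ¬ φ v'. Then ¬ Q ℓ_a v_a and ¬ Q ℓ_b v_b; that is, every step inside the component occurring in an unsafe evaluation satisfies the negation of the conditional invariant at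 both its source and target, so the evaluation survives replacing each (ℓ, τ, ℓ') ∈ C by (ℓ, τ ∧ ¬Q(ℓ) ∧ ¬Q(ℓ')', ℓ'). -/
variable {L V : Type*}

namespace CondInductiveInv

variable {C : Set (Transition L V)} {Q : L → V → Prop}

theorem of_stepP_s6 (hQ : CondInductiveInv C Q) {s s' : L × V} (h : StepP C s s')
    (hs : Q s.1 s.2) : Q s'.1 s'.2 := by
  obtain ⟨t, htC, hsrc, htgt, hrel⟩ := h
  rw [htgt]
  exact hQ t htC _ _ (hsrc ▸ hs) hrel

theorem of_steps_s6 (hQ : CondInductiveInv C Q) {s s' : L × V} (h : Steps C s s')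
    (hs : Q s.1 s.2) : Q s'.1 s'.2 :=
  Relation.ReflTransGen.head_induction_on (motive := fun s _ => Q s.1 s.2 → Q s'.1 s'.2) h
    id (fun hstep _ ih hs => ih (hQ.of_stepP_s6 hstep hs)) hs

end CondInductiveInv

theorem narrowing_component_preserves_unsafe_general (C : Set (Transition L V))
    (Q : L → V → Prop) (hQ : CondInductiveInv C Q)
    (texit : Transition L V) (φ : V → Prop)
    (hsafety : ∀ v v' : V, Q texit.src v → texit.rel v v' → φ v')
    (tc : Transition L V) (htc : tc ∈ C) :
    ∀ (ℓ' : L) (v₁ va vb v v' : V),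
      Steps C (ℓ', v₁) (tc.src, va) → tc.rel va vb →
      Steps C (tc.tgt, vb) (texit.src, v) → texit.rel v v' → ¬ φ v' →
      ¬ Q tc.src va ∧ ¬ Q tc.tgt vb := by
  intro ℓ' v₁ va vb v v' _ hc hpath hexit hunsafe
  have not_Q_b : ¬ Q tc.tgt vb := fun hb =>
    hunsafe (hsafety v v' (hQ.of_steps_s6 hpath hb) hexit)
  exact ⟨fun ha => not_Q_b (hQ tc htc va vb ha hc), not_Q_b⟩

/-- narrowing of component transitions preserves unsafe evaluations. -/
theorem narrowing_component_preserves_unsafe (C : Set (Transition L V))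
    (Q : L → V → Prop) (hQ : CondInductiveInv C Q)
    (texit : Transition L V) (hexit : texit ∉ C) (φ : V → Prop)
    (hsafety : ∀ v v' : V, Q texit.src v → texit.rel v v' → φ v')
    (tc : Transition L V) (htc : tc ∈ C) :
    ∀ (ℓ' : L) (v₁ va vb v v' : V),
      Steps C (ℓ', v₁) (tc.src, va) → tc.rel va vb →
      Steps C (tc.tgt, vb) (texit.src, v) → texit.rel v v' → ¬ φ v' →
      ¬ Q tc.src va ∧ ¬ Q tc.tgt vb :=
  narrowing_component_preserves_unsafe_general C Q hQ texit φ hsafety tc htc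
end

section
/- (Combination step in the soundness of CheckSafe, Theorem 2.) Let P be a program, C ⊆ P a set of transitions, E_C ⊆ P a set of entry transitions, t_exit = (ℓ̃, τ_e, ℓ_e) ∈ P with t_exit ∉ C, and φ : V → Prop. Assume: (i) Q : L → (V → Prop) is a conditional inductive invariant for C and for all v, v', Q ℓ̃ v and τ_e v v' imply φ v'; (ii) for each entry t = (ℓ, τ, ℓ') ∈ E_C, Q ℓ' is a conjunction of finitely many literals, and P is safe for the assertion (t, L) for every such literal L; (iii) every evaluation of P from an initial state ending with a step via t_exit contains a step via some entry t = (ℓ, τ, ℓ') ∈ E_C after which all steps up to the final t_exit step use transitions in C. Then P is safe for the assertion (t_exit, φ). -/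
variable {L V : Type*}

section

variable {C : Set (Transition L V)} {Q : L → V → Prop}

theorem CondInductiveInv.stepP (hQ : CondInductiveInv C Q) {s s' : L × V}
    (h : StepP C s s') (hs : Q s.1 s.2) : Q s'.1 s'.2 := by
  obtain ⟨t, ht, hsrc, htgt, hrel⟩ := h
  exact htgt ▸ hQ t ht _ _ (hsrc ▸ hs) hrel

theorem CondInductiveInv.steps (hQ : CondInductiveInv C Q) {s s' : L × V}
    (h : Steps C s s') (hs : Q s.1 s.2) : Q s'.1 s'.2 := by
  induction h with
  | refl => exact hs
  | tail _ hstep ih => exact hQ.stepP hstep ih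

end

section

variable {ℓ0 : L} {P : Set (Transition L V)} {t : Transition L V}

theorem Safe.mono {φ ψ : V → Prop} (h : Safe ℓ0 P t φ) (hφψ : ∀ v, φ v → ψ v) :
    Safe ℓ0 P t ψ :=
  fun v₀ sb s hsb hs => hφψ _ (h v₀ sb s hsb hs)

theorem Safe.forall {ι : Sort*} {φ : ι → V → Prop} (h : ∀ i, Safe ℓ0 P t (φ i)) :
    Safe ℓ0 P t fun v => ∀ i, φ i v :=
  fun v₀ sb s hsb hs i => h i v₀ sb s hsb hs

end

theorem checkSafe_sound_general (ℓ0 : L) (P C E : Set (Transition L V))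
    (texit : Transition L V)
    (φ : V → Prop) (Q : L → V → Prop)
    (hQ : CondInductiveInv C Q)
    (hsafety : ∀ v v' : V, Q texit.src v → texit.rel v v' → φ v')
    (hentries : ∀ t ∈ E, ∃ (k : ℕ) (Lit : Fin k → V → Prop),
      (∀ v : V, Q t.tgt v ↔ ∀ i, Lit i v) ∧ ∀ i, Safe ℓ0 P t (Lit i))
    (hdom : ∀ (v₀ : V) (sb s : L × V), Steps P (ℓ0, v₀) sb → StepT texit sb s →
      ∃ t ∈ E, ∃ s₁ s₂ : L × V,
        Steps P (ℓ0, v₀) s₁ ∧ StepT t s₁ s₂ ∧ Steps C s₂ sb) :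
    Safe ℓ0 P texit φ := by
  have hentry : ∀ t ∈ E, Safe ℓ0 P t (Q t.tgt) := fun t ht => by
    obtain ⟨k, Lit, hQLit, hLit⟩ := hentries t ht
    exact (Safe.forall hLit).mono fun v hv => (hQLit v).2 hv
  intro v₀ sb s hsb hs
  obtain ⟨t, ht, s₁, s₂, hs₁, hs₁₂, hC⟩ := hdom v₀ sb s hsb hs
  have hQ₂ : Q s₂.1 s₂.2 := hs₁₂.2.1 ▸ hentry t ht v₀ s₁ s₂ hs₁ hs₁₂
  have hQb : Q sb.1 sb.2 := hQ.steps hC hQ₂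
  exact hsafety sb.2 s.2 (hs.1 ▸ hQb) hs.2.2

/-- Theorem 2, combination step: soundness of CheckSafe. -/
theorem checkSafe_sound (ℓ0 : L) (P C E : Set (Transition L V))
    (hCP : C ⊆ P) (hEP : E ⊆ P)
    (texit : Transition L V) (hexitP : texit ∈ P) (hexitC : texit ∉ C)
    (φ : V → Prop) (Q : L → V → Prop)
    (hQ : CondInductiveInv C Q)
    (hsafety : ∀ v v' : V, Q texit.src v → texit.rel v v' → φ v')
    (hentries : ∀ t ∈ E, ∃ (k : ℕ) (Lit : Fin k → V → Prop),
      (∀ v : V, Q t.tgt v ↔ ∀ i, Lit i v) ∧ ∀ i, Safe ℓ0 P t (Lit i))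
    (hdom : ∀ (v₀ : V) (sb s : L × V), Steps P (ℓ0, v₀) sb → StepT texit sb s →
      ∃ t ∈ E, ∃ s₁ s₂ : L × V,
        Steps P (ℓ0, v₀) s₁ ∧ StepT t s₁ s₂ ∧ Steps C s₂ sb) :
    Safe ℓ0 P texit φ :=
  checkSafe_sound_general ℓ0 P C E texit φ Q hQ hsafety hentries hdom
end

section
/- (Correctness of program strengthening after a successful proof.) Let P be a program, t = (ℓ, τ, ℓ') ∈ P, and φ : V → Prop such that P is safe for the assertion (t, φ). Let P' be the program obtained from P by replacing t with the strengthened transition t' = (ℓ, λ v v', τ v v' ∧ φ v', ℓ'). Then P and P' have exactly the same evaluations from initial states: for all states s, s', (s is initial and s →_P^* s') if and only if (s is initial and s →_{P'}^* s'). In particular, P and P' have the same reachable states. -/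
variable {L V : Type*}

/-!
Every step of the strengthened program is a step of `P`. Conversely, a step of `P` fails to be
one of the strengthened program only if it is a `t`-step into a valuation violating `φ`, and
safety rules this out along every evaluation from an initial state.
-/

theorem Relation.ReflTransGen.mono_of_reachable {α : Type*} {r p : α → α → Prop} {a b : α}
    (h : ∀ c d, Relation.ReflTransGen r a c → r c d → p c d) (hab : Relation.ReflTransGen r a b) :
    Relation.ReflTransGen p a b := by
  induction hab with
  | refl => exact .refl
  | tail hac hcd ih => exact ih.tail (h _ _ hac hcd)

def Transition.strengthen (t : Transition L V) (φ : V → Prop) : Transition L V :=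
  ⟨t.src, fun v v' => t.rel v v' ∧ φ v', t.tgt⟩

def strengthenAt (P : Set (Transition L V)) (t : Transition L V) (φ : V → Prop) :
    Set (Transition L V) :=
  P \ {t} ∪ {t.strengthen φ}

theorem stepT_strengthen_iff {t : Transition L V} {φ : V → Prop} {s s' : L × V} :
    StepT (t.strengthen φ) s s' ↔ StepT t s s' ∧ φ s'.2 := by
  simp only [StepT, Transition.strengthen, and_assoc]

theorem stepP_of_stepP_strengthenAt {P : Set (Transition L V)} {t : Transition L V}
    (ht : t ∈ P) (φ : V → Prop) {s s' : L × V} (h : StepP (strengthenAt P t φ) s s') :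
    StepP P s s' := by
  obtain ⟨u, ⟨huP, -⟩ | rfl, hu⟩ := h
  · exact ⟨u, huP, hu⟩
  · exact ⟨t, ht, (stepT_strengthen_iff.mp hu).1⟩

theorem stepP_strengthenAt_of_safe {ℓ0 : L} {P : Set (Transition L V)} {t : Transition L V}
    {φ : V → Prop} (hsafe : Safe ℓ0 P t φ) {v₀ : V} {sb s : L × V}
    (hreach : Steps P (ℓ0, v₀) sb) (h : StepP P sb s) : StepP (strengthenAt P t φ) sb s := by
  obtain ⟨u, huP, hu⟩ := h
  by_cases hut : u = t
  · subst hut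
    exact ⟨u.strengthen φ, Or.inr rfl, stepT_strengthen_iff.mpr ⟨hu, hsafe v₀ sb s hreach hu⟩⟩
  · exact ⟨u, Or.inl ⟨huP, hut⟩, hu⟩

/-- strengthening a proven-safe transition preserves evaluations from initial states. -/
theorem strengthening_correct (ℓ0 : L) (P : Set (Transition L V))
    (t : Transition L V) (ht : t ∈ P) (φ : V → Prop)
    (hsafe : Safe ℓ0 P t φ) :
    ∀ s s' : L × V,
      (s.1 = ℓ0 ∧ Steps P s s') ↔
      (s.1 = ℓ0 ∧
        Steps ((P \ {t}) ∪ {⟨t.src, fun v v' => t.rel v v' ∧ φ v', t.tgt⟩}) s s') := by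
  rintro ⟨ℓ, v₀⟩ s'
  refine and_congr_right fun (hℓ : ℓ = ℓ0) => ?_
  subst hℓ
  constructor
  · exact Relation.ReflTransGen.mono_of_reachable fun _ _ => stepP_strengthenAt_of_safe hsafe
  · exact Relation.ReflTransGen.mono (fun _ _ => stepP_of_stepP_strengthenAt ht φ) _ _
end

section
/- (Strengthening of narrowed transitions.) Let P be a program and t = (ℓ, τ, ℓ') ∈ P a transition whose relation has the narrowed form τ v v' ↔ (τ_o v v' ∧ ¬ψ₁ v' ∧ … ∧ ¬ψ_m v') for some relation τ_o : V → V → Prop and predicates ψ₁, …, ψ_m : V → Prop. If P is safe for the assertion (t, φ), then for every evaluation (ℓ0, v₀) →_P^* (ℓ, v) starting at an initial state and every v' with τ_o v v', the disjunction ψ₁ v' ∨ … ∨ ψ_m v' ∨ φ v' holds; i.e., ψ₁' ∨ … ∨ ψ_m' ∨ φ' always holds after using the original (unnarrowed) transition t_o = (ℓ, τ_o, ℓ'). -/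
variable {L V : Type*}

theorem Safe.of_steps_of_rel {ℓ0 : L} {P : Set (Transition L V)} {t : Transition L V}
    {φ : V → Prop} (hsafe : Safe ℓ0 P t φ) {v₀ v v' : V} (hsteps : Steps P (ℓ0, v₀) (t.src, v))
    (hrel : t.rel v v') : φ v' :=
  hsafe v₀ (t.src, v) (t.tgt, v') hsteps ⟨rfl, rfl, hrel⟩

theorem strengthening_narrowed_general (ℓ0 : L) (P : Set (Transition L V))
    (t : Transition L V)
    (τo : V → V → Prop) (m : ℕ) (ψ : Fin m → V → Prop)
    (hnarrow : ∀ v v' : V, t.rel v v' ↔ (τo v v' ∧ ∀ i, ¬ ψ i v'))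
    (φ : V → Prop) (hsafe : Safe ℓ0 P t φ) :
    ∀ v₀ v : V, Steps P (ℓ0, v₀) (t.src, v) →
      ∀ v' : V, τo v v' → (∃ i, ψ i v') ∨ φ v' := by
  intro v₀ v hsteps v' hτo
  refine or_iff_not_imp_left.2 fun hψ => ?_
  exact hsafe.of_steps_of_rel hsteps ((hnarrow v v').2 ⟨hτo, not_exists.1 hψ⟩)

/-- strengthening of narrowed transitions. -/
theorem strengthening_narrowed (ℓ0 : L) (P : Set (Transition L V))
    (t : Transition L V) (ht : t ∈ P)
    (τo : V → V → Prop) (m : ℕ) (ψ : Fin m → V → Prop)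
    (hnarrow : ∀ v v' : V, t.rel v v' ↔ (τo v v' ∧ ∀ i, ¬ ψ i v'))
    (φ : V → Prop) (hsafe : Safe ℓ0 P t φ) :
    ∀ v₀ v : V, Steps P (ℓ0, v₀) (t.src, v) →
      ∀ v' : V, τo v v' → (∃ i, ψ i v') ∨ φ v' :=
  strengthening_narrowed_general ℓ0 P t τo m ψ hnarrow φ hsafe
end
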